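/- arXiv:2305.08958 — 3 statements merged into one kernel-verified Lean document; each statement's English description precedes it below -/
import Mathlib

section
/- Suppose all investors j ≠ i choose x_j = ω₁ and the central bank plays r = (1-α)(ω₁+ω₂) + α·x̄. Then the expected utility of investor i satisfies E[u_i] = -(1/2)(1-α)²σ₂² - βω₁ - (1/2)(1-α/N)²(x_i-ω₁)² - β(α/N)(x_i-ω₁), where σ₂² = Var(ω₂) and E[ω₂]=0. -/
open MeasureTheory

/-- If x_j = ω₁ for j ≠ i and r = (1-α)(ω₁+ω₂) + α·x̄ with
x̄ = ((N-1)ω₁ + x_i)/N, then E[u_i] = -(1/2)(1-α)²σ₂² - βω₁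
- (1/2)(1-α/N)²(x_i-ω₁)² - β(α/N)(x_i-ω₁), where ω₂ has mean 0, variance σ₂². -/
theorem stmt_3 {Ω : Type*} [MeasurableSpace Ω] (μ : Measure Ω) [IsProbabilityMeasure μ]
    (W : Ω → ℝ) (hint : Integrable W μ) (hint2 : Integrable (fun t => (W t)^2) μ)
    (hmean : ∫ t, W t ∂μ = 0) (σ₂sq : ℝ) (hvar : ∫ t, (W t)^2 ∂μ = σ₂sq)
    (α β ω₁ xi : ℝ) (hα : α ∈ Set.Ioo (0:ℝ) 1) (hβ : 0 < β)
    (N : ℕ) (hN : 1 ≤ N)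
    (xbar : ℝ) (hxbar : xbar = (((N:ℝ)-1)*ω₁ + xi)/(N:ℝ))
    (r : Ω → ℝ) (hr : ∀ t, r t = (1-α)*(ω₁ + W t) + α*xbar) :
    ∫ t, (-(1/2)*(xi - r t)^2 - β * r t) ∂μ =
      -(1/2)*(1-α)^2*σ₂sq - β*ω₁
        - (1/2)*(1-α/(N:ℝ))^2*(xi-ω₁)^2 - β*((α/(N:ℝ))*(xi-ω₁)) := by
  set c : ℝ := (1-α)*ω₁ + α*xbar with hc
  have key : ∀ t, -(1/2)*(xi - r t)^2 - β * r t =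
      (-(1/2)*(xi - c)^2 - β*c) + ((xi - c)*(1-α) - β*(1-α)) * W t
        + (-(1/2)*(1-α)^2) * (W t)^2 := by
    intro t; rw [hr, hc]; ring
  have hI : ∫ t, (-(1/2)*(xi - r t)^2 - β * r t) ∂μ =
      (-(1/2)*(xi - c)^2 - β*c) + ((xi - c)*(1-α) - β*(1-α)) * 0
        + (-(1/2)*(1-α)^2) * σ₂sq := by
    simp_rw [key]
    rw [integral_add (by exact (integrable_const _).add (hint.const_mul _))
        (hint2.const_mul _),
      integral_add (integrable_const _) (hint.const_mul _),
      integral_const_mul, integral_const_mul, hmean, hvar, integral_const]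
    simp
  rw [hI]
  have hN0 : (N:ℝ) ≠ 0 := by positivity
  rw [hxbar] at hc
  have hc' : c = ω₁ + (α/(N:ℝ))*(xi - ω₁) := by
    rw [hc]; field_simp; ring
  rw [hc']
  field_simp
  ring
end

section
/- The welfare gap between the transparent oligopoly and the competitive benchmark is W(σ^{oli,tr}) - W(σ^{com}) = -α³β²/(2(N-α)²(1-α)), which is strictly negative, and tends to 0 as N → ∞. -/
open Filter

/-- The welfare gap between the transparent oligopoly and the
competitive benchmark is -α³β²/(2(N-α)²(1-α)) < 0, and it tends to 0 as N → ∞. -/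
theorem stmt_8 (α β σ₂sq : ℝ) (hα : α ∈ Set.Ioo (0:ℝ) 1) (hβ : 0 < β)
    (hσ : 0 ≤ σ₂sq)
    (Wcom : ℝ) (hWcom : Wcom = -(1/2)*α*(1-α)*σ₂sq)
    (Wtr : ℝ → ℝ)
    (hWtr : ∀ N : ℝ, Wtr N = -(1/2)*α*(1-α)*(σ₂sq + (α*β/((N-α)*(1-α)))^2)) :
    (∀ N : ℝ, α < N →
      Wtr N - Wcom = -(α^3*β^2)/(2*(N-α)^2*(1-α)) ∧ Wtr N - Wcom < 0) ∧
    Tendsto (fun N : ℝ => Wtr N - Wcom) atTop (nhds 0) := by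
  obtain ⟨hα0, hα1⟩ := hα
  have h1α : (0:ℝ) < 1 - α := by linarith
  have key : ∀ N : ℝ, α < N →
      Wtr N - Wcom = -(α^3*β^2)/(2*(N-α)^2*(1-α)) := by
    intro N hN
    have hNα : N - α ≠ 0 := by linarith
    have h1α' : 1 - α ≠ 0 := by linarith
    rw [hWtr, hWcom]
    field_simp
    ring
  refine ⟨fun N hN => ⟨key N hN, ?_⟩, ?_⟩
  · rw [key N hN]
    have hNα : (0:ℝ) < N - α := by linarith
    have hnum : 0 < α^3*β^2 := by positivity
    have hden : 0 < 2*(N-α)^2*(1-α) := by positivity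
    have := div_pos hnum hden
    rw [neg_div]
    linarith
  · have hcong : (fun N : ℝ => -(α^3*β^2)/(2*(N-α)^2*(1-α))) =ᶠ[atTop]
        (fun N : ℝ => Wtr N - Wcom) := by
      filter_upwards [eventually_gt_atTop α] with N hN
      exact (key N hN).symm
    refine Tendsto.congr' hcong ?_
    have h2 : Tendsto (fun N : ℝ => 2*(N-α)^2*(1-α)) atTop atTop := by
      have hsq : Tendsto (fun N : ℝ => (N-α)^2) atTop atTop :=
        (tendsto_pow_atTop (two_ne_zero)).comp (tendsto_atTop_add_const_right _ _ tendsto_id)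
      have := hsq.const_mul_atTop (by norm_num : (0:ℝ) < 2)
      exact this.atTop_mul_const h1α
    have := h2.inv_tendsto_atTop.const_mul (-(α^3*β^2))
    simpa [div_eq_mul_inv, mul_zero] using this
end

section
/- Define W(ᾱ) = -(1/2)[ᾱ²(1-α) + α(1-ᾱ)²](σ₂² + b(ᾱ)²) with b(ᾱ) = ᾱβ/((N-ᾱ)(1-ᾱ)). Then for any ᾱ ∈ [α, 1), W'(ᾱ) < 0 if ᾱ > α and W'(α) ≤ 0 strictly unless b·b' = 0; moreover W'(0) > 0 when σ₂² > 0. Hence any maximizer ᾱ* of W over [0,1) satisfies 0 < ᾱ* < α (the optimal central banker is kitish). -/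
/-!
The policy bias `b(ᾱ) = ᾱβ/((N-ᾱ)(1-ᾱ))` vanishes at `0` and is positive and increasing on
`(0,1)`. Hence in `W'(ᾱ) = (α-ᾱ)(σ₂² + b²) - [ᾱ²(1-α)+α(1-ᾱ)²] b' b` the second term is
strictly negative for `ᾱ > 0`, and so is the first once `ᾱ ≥ α`: `W' < 0` on `[α,1)`.
At `ᾱ = 0` only the first term survives, `W'(0) = ασ₂² > 0`. A maximizer of `W` on `[0,1)`
therefore cannot be the left endpoint (where the one-sided derivative would be `≤ 0`), and
cannot lie in `[α,1)` (where Fermat's rule would force `W' = 0`).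
-/

open Set

theorem IsLocalMaxOn.hasDerivWithinAt_nonpos_of_Icc_subset {f : ℝ → ℝ} {s : Set ℝ}
    {a b f' : ℝ} (h : IsLocalMaxOn f s a) (hf : HasDerivWithinAt f f' s a) (hab : a < b)
    (hs : Icc a b ⊆ s) : f' ≤ 0 := by
  have hcone : b - a ∈ posTangentConeAt s a :=
    sub_mem_posTangentConeAt_of_segment_subset ((segment_eq_Icc hab.le).trans_subset hs)
  have := h.hasFDerivWithinAt_nonpos hf.hasFDerivWithinAt hcone
  simp only [ContinuousLinearMap.toSpanSingleton_apply, smul_eq_mul] at this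
  exact nonpos_of_mul_nonpos_right this (sub_pos.2 hab)

theorem IsMaxOn.mem_Ioo_of_hasDerivAt {f f' : ℝ → ℝ} {a c α x : ℝ}
    (hmax : IsMaxOn f (Ico a c) x) (hx : x ∈ Ico a c)
    (hf : ∀ y ∈ Ico a c, HasDerivAt f (f' y) y) (ha : 0 < f' a)
    (hα : ∀ y ∈ Ico α c, f' y ≠ 0) : a < x ∧ x < α := by
  obtain ⟨hax, hxc⟩ := hx
  have hac : a < c := hax.trans_lt hxc
  have hxa : a < x := by
    refine hax.lt_of_ne fun hxa => ?_
    subst hxa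
    have hmid : a < (a + c) / 2 := by linarith
    have hsub : Icc a ((a + c) / 2) ⊆ Ico a c := Icc_subset_Ico_right (by linarith)
    exact ha.not_ge <| hmax.localize.hasDerivWithinAt_nonpos_of_Icc_subset
      (hf a ⟨le_rfl, hac⟩).hasDerivWithinAt hmid hsub
  refine ⟨hxa, lt_of_not_ge fun hαx => hα x ⟨hαx, hxc⟩ ?_⟩
  have hnhds : Ico a c ∈ nhds x :=
    Filter.mem_of_superset (isOpen_Ioo.mem_nhds ⟨hxa, hxc⟩) Ioo_subset_Ico_self
  exact (hmax.isLocalMax hnhds).hasDerivAt_eq_zero (hf x ⟨hax, hxc⟩)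

theorem hasDerivAt_mul_div_sub_mul_one_sub (N β x : ℝ) (hx : (N - x) * (1 - x) ≠ 0) :
    HasDerivAt (fun a => a * β / ((N - a) * (1 - a)))
      ((N - x ^ 2) * β / ((1 - x) ^ 2 * (N - x) ^ 2)) x := by
  have hden := ((hasDerivAt_id x).const_sub N).fun_mul ((hasDerivAt_id x).const_sub 1)
  refine (((hasDerivAt_id x).mul_const β).fun_div hden hx).congr_deriv ?_
  have h1 : 1 - x ≠ 0 := right_ne_zero_of_mul hx
  have hN : N - x ≠ 0 := left_ne_zero_of_mul hx
  simp only [id]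
  rw [div_eq_div_iff (pow_ne_zero 2 hx) (by positivity)]
  ring

theorem hasDerivAt_welfare {b : ℝ → ℝ} {d x : ℝ} (α σ : ℝ) (hb : HasDerivAt b d x) :
    HasDerivAt (fun a => -(1 / 2) * (a ^ 2 * (1 - α) + α * (1 - a) ^ 2) * (σ + b a ^ 2))
      ((α - x) * (σ + b x ^ 2) - (x ^ 2 * (1 - α) + α * (1 - x) ^ 2) * d * b x) x := by
  have hweight := ((hasDerivAt_pow 2 x).mul_const (1 - α)).fun_add
    ((((hasDerivAt_id x).const_sub 1).fun_pow 2).const_mul α)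
  refine ((hweight.const_mul (-(1 / 2))).fun_mul ((hb.fun_pow 2).const_add σ)).congr_deriv ?_
  simp only [id]
  push_cast
  ring

theorem mul_div_sub_mul_one_sub_pos {N β a : ℝ} (hN : 1 ≤ N) (hβ : 0 < β) (ha0 : 0 < a)
    (ha1 : a < 1) : 0 < a * β / ((N - a) * (1 - a)) :=
  div_pos (mul_pos ha0 hβ) (mul_pos (by linarith) (by linarith))

theorem sub_sq_mul_div_pos {N β a : ℝ} (hN : 1 ≤ N) (hβ : 0 < β) (ha0 : 0 ≤ a)
    (ha1 : a < 1) : 0 < (N - a ^ 2) * β / ((1 - a) ^ 2 * (N - a) ^ 2) := by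
  have ha2 : a ^ 2 < 1 := by nlinarith
  exact div_pos (mul_pos (by linarith) hβ)
    (mul_pos (pow_pos (by linarith) 2) (pow_pos (by linarith) 2))

/-- Kites: With W(ᾱ) = -(1/2)[ᾱ²(1-α)+α(1-ᾱ)²](σ₂²+b(ᾱ)²),
b(ᾱ) = ᾱβ/((N-ᾱ)(1-ᾱ)), and
W'(ᾱ) = (α-ᾱ)(σ₂²+b(ᾱ)²) - [ᾱ²(1-α)+α(1-ᾱ)²]b'(ᾱ)b(ᾱ):
W'(ᾱ) < 0 for ᾱ ∈ (α,1); W'(α) ≤ 0, strictly unless b(α)b'(α) = 0;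
W'(0) > 0 when σ₂² > 0; and any maximizer of W on [0,1) lies in (0,α). -/
theorem stmt_13 (α β σ₂sq : ℝ) (hα : α ∈ Set.Ioo (0:ℝ) 1) (hβ : 0 < β)
    (hσ : 0 < σ₂sq) (N : ℕ) (hN : 1 ≤ N)
    (b b' W W' : ℝ → ℝ)
    (hb : ∀ a, b a = a*β/(((N:ℝ)-a)*(1-a)))
    (hb' : ∀ a, b' a = ((N:ℝ)-a^2)*β/((1-a)^2*((N:ℝ)-a)^2))
    (hW : ∀ a, W a = -(1/2)*(a^2*(1-α)+α*(1-a)^2)*(σ₂sq + (b a)^2))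
    (hW' : ∀ a, W' a = (α-a)*(σ₂sq + (b a)^2) - (a^2*(1-α)+α*(1-a)^2)*(b' a)*(b a)) :
    (∀ a : ℝ, α < a → a < 1 → W' a < 0) ∧
    (W' α ≤ 0 ∧ (b α * b' α ≠ 0 → W' α < 0)) ∧
    (0 < W' 0) ∧
    (∀ astar : ℝ, astar ∈ Set.Ico (0:ℝ) 1 →
      IsMaxOn W (Set.Ico (0:ℝ) 1) astar → 0 < astar ∧ astar < α) := by
  obtain ⟨hα0, hα1⟩ := hα
  have hN1 : (1 : ℝ) ≤ N := by exact_mod_cast hN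
  have hneg : ∀ a, α ≤ a → a < 1 → W' a < 0 := by
    intro a hαa ha1
    have hba : 0 < b a := hb a ▸ mul_div_sub_mul_one_sub_pos hN1 hβ (hα0.trans_le hαa) ha1
    have hb'a : 0 < b' a := hb' a ▸ sub_sq_mul_div_pos hN1 hβ (hα0.le.trans hαa) ha1
    have hweight : 0 < a ^ 2 * (1 - α) + α * (1 - a) ^ 2 := by nlinarith
    rw [hW']
    nlinarith [mul_pos (mul_pos hweight hb'a) hba, sq_nonneg (b a)]
  have hpos0 : 0 < W' 0 := by
    rw [hW', hb]
    simpa using mul_pos hα0 hσ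
  have hderiv : ∀ a ∈ Ico (0 : ℝ) 1, HasDerivAt W (W' a) a := by
    rintro a ⟨ha0, ha1⟩
    have hbd : HasDerivAt b (b' a) a := by
      rw [funext hb, hb']
      exact hasDerivAt_mul_div_sub_mul_one_sub _ β a (mul_pos (by linarith) (by linarith)).ne'
    rw [funext hW, hW']
    exact hasDerivAt_welfare α σ₂sq hbd
  exact ⟨fun a hαa ha1 => hneg a hαa.le ha1,
    ⟨(hneg α le_rfl hα1).le, fun _ => hneg α le_rfl hα1⟩, hpos0,
    fun x hx hmax => hmax.mem_Ioo_of_hasDerivAt hx hderiv hpos0 fun y hy => (hneg y hy.1 hy.2).ne⟩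
end
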